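/- arXiv:1705.10959 — 3 statements merged into one kernel-verified Lean document; each statement's English description precedes it below -/
import Mathlib

section
/- Let ℱ ∈ ℚ_α[x₁,x₂]((ℏ^{−1}))[[q₁,q₂]] be symmetric in (x₁,x₂) and 𝔉-recursive for a collection 𝔉 = (𝔉_{ij}^{ik}(d)) ∪ (𝔉_{ij}^{kj}(d)) as in the two-variable recursion, and define ℱ̄ := ℱ|_{q₁=q₂=qe^{πi}} + [ℏ(q₁ d/dq₁ − q₂ d/dq₂)/(x₁−x₂)] ℱ|_{q₁=q₂=qe^{πi}}. Then ℱ̄ is C-recursive with C_{ij}^{ik}(d) = (−1)^d · (α_i−α_k)/(α_i−α_j) · 𝔉_{ij}^{ik}(d) and C_{ij}^{kj}(d) = (−1)^d · (α_k−α_j)/(α_i−α_j) · 𝔉_{ij}^{kj}(d). -/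
noncomputable section

open Finset

/-- The field `ℚ_α = ℚ(α₁,…,α_n)`. -/
abbrev Kalpha (n : ℕ) : Type := FractionRing (MvPolynomial (Fin n) ℚ)

/-- The generators `α₁,…,α_n` of `ℚ_α`. -/
def av (n : ℕ) (i : Fin n) : Kalpha n :=
  algebraMap (MvPolynomial (Fin n) ℚ) (Kalpha n) (MvPolynomial.X i)

/-- Evaluation of a rational function of `ℏ` at `ℏ = c`. -/
def ev {K : Type*} [Field K] (c : K) (f : RatFunc K) : K :=
  RatFunc.eval (RingHom.id K) c f

/-- A rational function of `ℏ` is a Laurent polynomial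
`Σ_{r=−N}^{N} c_r ℏ^r ∈ ℚ_α[ℏ,ℏ⁻¹]` iff it is `p(ℏ)/ℏ^m`. -/
def IsLaurentPoly {K : Type*} [Field K] (g : RatFunc K) : Prop :=
  ∃ (p : Polynomial K) (m : ℕ),
    g = algebraMap (Polynomial K) (RatFunc K) p / RatFunc.X ^ m

/-- `C`-recursivity (Definition 3.1, in the explicit form (3.8)) of a family
`G(α_i,α_j,ℏ,q) = Σ_d G_{ij,d}(ℏ) q^d`: each coefficient is a Laurent polynomial in
`ℏ` plus the prescribed simple-pole contributions, with structure constants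
`C_{ij}^{kj}(d) = C1 i j k d` and `C_{ij}^{ik}(d) = C2 i j k d`. -/
def CRecursive (n : ℕ) (C1 C2 : Fin n → Fin n → Fin n → ℕ → Kalpha n)
    (G : Fin n → Fin n → ℕ → RatFunc (Kalpha n)) : Prop :=
  ∀ i j : Fin n, i ≠ j → ∀ d : ℕ,
    ∃ L : RatFunc (Kalpha n), IsLaurentPoly L ∧
      G i j d = L +
        ∑ e ∈ Finset.Icc 1 d,
          ((∑ k ∈ Finset.univ.erase j,
              RatFunc.C (C2 i j k e *
                  ev ((av n k - av n j) / (e : Kalpha n)) (G i k (d - e))) /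
                (RatFunc.X - RatFunc.C ((av n k - av n j) / (e : Kalpha n)))) +
            (∑ k ∈ Finset.univ.erase i,
              RatFunc.C (C1 i j k e *
                  ev ((av n k - av n i) / (e : Kalpha n)) (G k j (d - e))) /
                (RatFunc.X - RatFunc.C ((av n k - av n i) / (e : Kalpha n)))))

/-- `𝔉`-recursivity (Definition 3.4) of a family
`F(α_i,α_j,ℏ,𝐪) = Σ_{(d₁,d₂)} F_{ij,(d₁,d₂)}(ℏ) q₁^{d₁} q₂^{d₂}`, with structure
constants `𝔉_{ij}^{kj}(d) = FC1 i j k d` (poles in the first slot, weighted by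
`q₁^d`) and `𝔉_{ij}^{ik}(d) = FC2 i j k d` (poles in the second slot, weighted by
`q₂^d`). -/
def MRecursive (n : ℕ) (FC1 FC2 : Fin n → Fin n → Fin n → ℕ → Kalpha n)
    (F : Fin n → Fin n → ℕ → ℕ → RatFunc (Kalpha n)) : Prop :=
  ∀ i j : Fin n, i ≠ j → ∀ e₁ e₂ : ℕ,
    ∃ L : RatFunc (Kalpha n), IsLaurentPoly L ∧
      F i j e₁ e₂ = L +
        (∑ e ∈ Finset.Icc 1 e₂, ∑ k ∈ Finset.univ.erase j,
          RatFunc.C (FC2 i j k e *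
              ev ((av n k - av n j) / (e : Kalpha n)) (F i k e₁ (e₂ - e))) /
            (RatFunc.X - RatFunc.C ((av n k - av n j) / (e : Kalpha n)))) +
        (∑ e ∈ Finset.Icc 1 e₁, ∑ k ∈ Finset.univ.erase i,
          RatFunc.C (FC1 i j k e *
              ev ((av n k - av n i) / (e : Kalpha n)) (F k j (e₁ - e) e₂)) /
            (RatFunc.X - RatFunc.C ((av n k - av n i) / (e : Kalpha n))))

/-- `ℱ̄ := ℱ|_{q₁=q₂=qe^{πi}} + [ℏ(q₁ d/dq₁ − q₂ d/dq₂)/(x₁−x₂)] ℱ|_{q₁=q₂=qe^{πi}}`,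
specialized at `(x₁,x₂) = (α_i,α_j)`: the coefficient of `q^d` is
`(−1)^d Σ_{d₁+d₂=d} (1 + ℏ(d₁−d₂)/(α_i−α_j)) F_{ij,(d₁,d₂)}(ℏ)`. -/
def Fbar (n : ℕ) (F : Fin n → Fin n → ℕ → ℕ → RatFunc (Kalpha n))
    (i j : Fin n) (d : ℕ) : RatFunc (Kalpha n) :=
  (-1 : RatFunc (Kalpha n)) ^ d * ∑ p ∈ Finset.HasAntidiagonal.antidiagonal d,
    (1 + RatFunc.X *
        RatFunc.C (((p.1 : Kalpha n) - (p.2 : Kalpha n)) / (av n i - av n j))) *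
      F i j p.1 p.2

namespace FbarAux

variable {K : Type*} [Field K]

/-- The denominator of `f` does not vanish at `c`. -/
def Reg (c : K) (f : RatFunc K) : Prop := Polynomial.eval c f.denom ≠ 0

lemma eval_ne_zero_of_dvd {c : K} {p q : Polynomial K} (h : p ∣ q)
    (hq : Polynomial.eval c q ≠ 0) : Polynomial.eval c p ≠ 0 := by
  obtain ⟨r, hr⟩ := h
  intro h0
  apply hq
  rw [hr, Polynomial.eval_mul, h0, zero_mul]

lemma reg_add {c : K} {f g : RatFunc K} (hf : Reg c f) (hg : Reg c g) :
    Reg c (f + g) :=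
  eval_ne_zero_of_dvd (RatFunc.denom_add_dvd f g)
    (by rw [Polynomial.eval_mul]; exact mul_ne_zero hf hg)

lemma reg_mul {c : K} {f g : RatFunc K} (hf : Reg c f) (hg : Reg c g) :
    Reg c (f * g) :=
  eval_ne_zero_of_dvd (RatFunc.denom_mul_dvd f g)
    (by rw [Polynomial.eval_mul]; exact mul_ne_zero hf hg)

lemma reg_algebraMap (c : K) (p : Polynomial K) :
    Reg c (algebraMap (Polynomial K) (RatFunc K) p) := by
  unfold Reg
  rw [RatFunc.denom_algebraMap]
  simp

lemma reg_div {c : K} (p q : Polynomial K) (hq : Polynomial.eval c q ≠ 0) :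
    Reg c (algebraMap (Polynomial K) (RatFunc K) p / algebraMap _ _ q) :=
  eval_ne_zero_of_dvd (RatFunc.denom_div_dvd p q) hq

lemma reg_sum {c : K} {ι : Type*} (s : Finset ι) (f : ι → RatFunc K)
    (h : ∀ i ∈ s, Reg c (f i)) : Reg c (∑ i ∈ s, f i) := by
  classical
  induction s using Finset.cons_induction with
  | empty => unfold Reg; simp
  | cons a s ha ih =>
      rw [Finset.sum_cons]
      exact reg_add (h a (Finset.mem_cons_self a s))
        (ih fun i hi => h i (Finset.mem_cons_of_mem hi))

lemma ev_add {c : K} {f g : RatFunc K} (hf : Reg c f) (hg : Reg c g) :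
    ev c (f + g) = ev c f + ev c g := by
  unfold ev; exact RatFunc.eval_add (f := RingHom.id K) (a := c) (x := f) (y := g) hf hg

lemma ev_mul {c : K} {f g : RatFunc K} (hf : Reg c f) (hg : Reg c g) :
    ev c (f * g) = ev c f * ev c g := by
  unfold ev; exact RatFunc.eval_mul (f := RingHom.id K) (a := c) (x := f) (y := g) hf hg

lemma ev_sum {c : K} {ι : Type*} (s : Finset ι) (f : ι → RatFunc K)
    (h : ∀ i ∈ s, Reg c (f i)) : ev c (∑ i ∈ s, f i) = ∑ i ∈ s, ev c (f i) := by
  classical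
  induction s using Finset.cons_induction with
  | empty => unfold ev; simp
  | cons a s ha ih =>
      rw [Finset.sum_cons, Finset.sum_cons,
        ev_add (h a (Finset.mem_cons_self a s))
          (reg_sum s f fun i hi => h i (Finset.mem_cons_of_mem hi)),
        ih fun i hi => h i (Finset.mem_cons_of_mem hi)]

lemma ev_algebraMap (c : K) (p : Polynomial K) :
    ev c (algebraMap (Polynomial K) (RatFunc K) p) = p.eval c := by
  unfold ev
  rw [RatFunc.eval_algebraMap]
  rfl

lemma laurent_algebraMap (p : Polynomial K) :
    IsLaurentPoly (algebraMap (Polynomial K) (RatFunc K) p) :=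
  ⟨p, 0, by simp⟩

lemma laurent_C (u : K) : IsLaurentPoly (RatFunc.C u) :=
  ⟨Polynomial.C u, 0, by simp [RatFunc.algebraMap_C]⟩

lemma laurent_add {f g : RatFunc K} (hf : IsLaurentPoly f) (hg : IsLaurentPoly g) :
    IsLaurentPoly (f + g) := by
  obtain ⟨p, m, rfl⟩ := hf
  obtain ⟨q, l, rfl⟩ := hg
  refine ⟨p * Polynomial.X ^ l + q * Polynomial.X ^ m, m + l, ?_⟩
  have hX : (RatFunc.X : RatFunc K) ≠ 0 := RatFunc.X_ne_zero
  field_simp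
  simp only [map_add, map_mul, map_pow, RatFunc.algebraMap_X]
  ring

lemma laurent_mul {f g : RatFunc K} (hf : IsLaurentPoly f) (hg : IsLaurentPoly g) :
    IsLaurentPoly (f * g) := by
  obtain ⟨p, m, rfl⟩ := hf
  obtain ⟨q, l, rfl⟩ := hg
  refine ⟨p * q, m + l, ?_⟩
  have hX : (RatFunc.X : RatFunc K) ≠ 0 := RatFunc.X_ne_zero
  field_simp
  simp only [map_add, map_mul, map_pow, RatFunc.algebraMap_X]
  ring

lemma laurent_zero : IsLaurentPoly (0 : RatFunc K) := ⟨0, 0, by simp⟩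

lemma laurent_sum {ι : Type*} (s : Finset ι) (f : ι → RatFunc K)
    (h : ∀ i ∈ s, IsLaurentPoly (f i)) : IsLaurentPoly (∑ i ∈ s, f i) := by
  classical
  induction s using Finset.cons_induction with
  | empty => simpa using laurent_zero
  | cons a s ha ih =>
      rw [Finset.sum_cons]
      exact laurent_add (h a (Finset.mem_cons_self a s))
        (ih fun i hi => h i (Finset.mem_cons_of_mem hi))

lemma neg_one_eq : (-1 : RatFunc K) = algebraMap (Polynomial K) (RatFunc K) (-1) := by
  simp

lemma neg_one_pow_eq (d : ℕ) :
    ((-1 : RatFunc K) ^ d) = algebraMap (Polynomial K) (RatFunc K) ((-1 : Polynomial K) ^ d) := by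
  rw [map_pow, ← neg_one_eq]

lemma laurent_neg_one_pow_mul {f : RatFunc K} (d : ℕ) (hf : IsLaurentPoly f) :
    IsLaurentPoly ((-1 : RatFunc K) ^ d * f) :=
  laurent_mul (by rw [neg_one_pow_eq]; exact laurent_algebraMap _) hf

lemma one_add_X_C_eq (t : K) : (1 + RatFunc.X * RatFunc.C t)
    = algebraMap (Polynomial K) (RatFunc K) (1 + Polynomial.X * Polynomial.C t) := by
  rw [map_add, map_one, map_mul, RatFunc.algebraMap_X, RatFunc.algebraMap_C]

lemma reg_one_add_X_C (c t : K) : Reg c (1 + RatFunc.X * RatFunc.C t) := by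
  rw [one_add_X_C_eq]; exact reg_algebraMap c _

lemma ev_one_add_X_C (c t : K) : ev c (1 + RatFunc.X * RatFunc.C t) = 1 + c * t := by
  rw [one_add_X_C_eq, ev_algebraMap]
  simp only [Polynomial.eval_add, Polynomial.eval_one, Polynomial.eval_mul,
    Polynomial.eval_X, Polynomial.eval_C]

lemma X_sub_C_ne (c : K) : (RatFunc.X - RatFunc.C c : RatFunc K) ≠ 0 := by
  rw [← RatFunc.algebraMap_X, ← RatFunc.algebraMap_C c, ← map_sub]
  exact RatFunc.algebraMap_ne_zero (Polynomial.X_sub_C_ne_zero c)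

lemma keydiv (t c u : K) :
    (1 + RatFunc.X * RatFunc.C t) * (RatFunc.C u / (RatFunc.X - RatFunc.C c))
      = RatFunc.C (t * u) +
        RatFunc.C ((1 + c * t) * u) / (RatFunc.X - RatFunc.C c) := by
  have hXc := X_sub_C_ne (K := K) c
  have key : (1 + RatFunc.X * RatFunc.C t) * RatFunc.C u
      = RatFunc.C (t * u) * (RatFunc.X - RatFunc.C c) + RatFunc.C ((1 + c * t) * u) := by
    simp only [map_mul, map_add, map_one]
    ring
  rw [← mul_div_assoc, key, add_div, mul_div_cancel_right₀ _ hXc]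

lemma reg_term (c cc : K) (hne : c ≠ cc) (u : K) :
    Reg c (RatFunc.C u / (RatFunc.X - RatFunc.C cc)) := by
  rw [← RatFunc.algebraMap_C u, ← RatFunc.algebraMap_X, ← RatFunc.algebraMap_C cc, ← map_sub]
  refine reg_div _ _ ?_
  simpa using sub_ne_zero.mpr hne

variable {n : ℕ}

lemma av_ne {i j : Fin n} (h : i ≠ j) : av n i ≠ av n j := by
  intro hEq
  have hP := IsFractionRing.injective (MvPolynomial (Fin n) ℚ) (Kalpha n) hEq
  have hev := congrArg (MvPolynomial.eval (fun t => if t = i then (1 : ℚ) else 0)) hP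
  simp [Ne.symm h] at hev

lemma pole_ne {a b m s : Fin n} {e e' : ℕ} (hab : a ≠ b) (hms : m ≠ s)
    (hs : s = a ∨ (s ≠ a ∧ s ≠ b)) (he : 1 ≤ e) (he' : 1 ≤ e') :
    (av n a - av n b) / (e : Kalpha n) ≠ (av n m - av n s) / (e' : Kalpha n) := by
  have he0 : (e : Kalpha n) ≠ 0 := Nat.cast_ne_zero.mpr (by omega)
  have he'0 : (e' : Kalpha n) ≠ 0 := Nat.cast_ne_zero.mpr (by omega)
  intro hEq
  rw [div_eq_div_iff he0 he'0] at hEq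
  have hEq2 : algebraMap (MvPolynomial (Fin n) ℚ) (Kalpha n)
      ((MvPolynomial.X a - MvPolynomial.X b) * (e' : MvPolynomial (Fin n) ℚ))
      = algebraMap (MvPolynomial (Fin n) ℚ) (Kalpha n)
      ((MvPolynomial.X m - MvPolynomial.X s) * (e : MvPolynomial (Fin n) ℚ)) := by
    simpa [av, map_mul, map_sub, map_natCast] using hEq
  have hP := IsFractionRing.injective (MvPolynomial (Fin n) ℚ) (Kalpha n) hEq2
  have hev := congrArg (MvPolynomial.eval (fun t => if t = s then (1 : ℚ) else 0)) hP
  have he1 : (1 : ℚ) ≤ (e : ℚ) := by exact_mod_cast he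
  have he'1 : (1 : ℚ) ≤ (e' : ℚ) := by exact_mod_cast he'
  rcases hs with rfl | ⟨hsa, hsb⟩
  · simp [Ne.symm hab, hms] at hev
    linarith
  · simp [Ne.symm hsa, Ne.symm hsb, hms] at hev
    linarith

lemma sum_shift2 {M : Type*} [AddCommMonoid M] (d : ℕ) (g : ℕ → ℕ → ℕ → M) :
    ∑ p ∈ Finset.HasAntidiagonal.antidiagonal d, ∑ e ∈ Finset.Icc 1 p.2, g p.1 p.2 e
      = ∑ e ∈ Finset.Icc 1 d, ∑ q ∈ Finset.HasAntidiagonal.antidiagonal (d - e), g q.1 (q.2 + e) e := by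
  rw [Finset.sum_sigma' (Finset.HasAntidiagonal.antidiagonal d) (fun p => Finset.Icc 1 p.2)
        (fun p e => g p.1 p.2 e),
      Finset.sum_sigma' (Finset.Icc 1 d) (fun e => Finset.HasAntidiagonal.antidiagonal (d - e))
        (fun e q => g q.1 (q.2 + e) e)]
  refine Finset.sum_nbij' (fun x => ⟨x.2, (x.1.1, x.1.2 - x.2)⟩)
    (fun x => ⟨(x.2.1, x.2.2 + x.1), x.1⟩) ?_ ?_ ?_ ?_ ?_
  · rintro ⟨⟨a, b⟩, e⟩ hx
    simp only [Finset.mem_sigma, Finset.HasAntidiagonal.mem_antidiagonal, Finset.mem_Icc] at hx ⊢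
    omega
  · rintro ⟨e, ⟨a, b⟩⟩ hx
    simp only [Finset.mem_sigma, Finset.HasAntidiagonal.mem_antidiagonal, Finset.mem_Icc] at hx ⊢
    omega
  · rintro ⟨⟨a, b⟩, e⟩ hx
    simp only [Finset.mem_sigma, Finset.HasAntidiagonal.mem_antidiagonal, Finset.mem_Icc] at hx
    have hb : b - e + e = b := by omega
    simp [hb]
  · rintro ⟨e, ⟨a, b⟩⟩ hx
    simp only [Finset.mem_sigma, Finset.HasAntidiagonal.mem_antidiagonal, Finset.mem_Icc] at hx
    have hb : b + e - e = b := by omega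
    simp [hb]
  · rintro ⟨⟨a, b⟩, e⟩ hx
    simp only [Finset.mem_sigma, Finset.HasAntidiagonal.mem_antidiagonal, Finset.mem_Icc] at hx
    have hb : b - e + e = b := by omega
    simp only [hb]

lemma sum_shift1 {M : Type*} [AddCommMonoid M] (d : ℕ) (g : ℕ → ℕ → ℕ → M) :
    ∑ p ∈ Finset.HasAntidiagonal.antidiagonal d, ∑ e ∈ Finset.Icc 1 p.1, g p.1 p.2 e
      = ∑ e ∈ Finset.Icc 1 d, ∑ q ∈ Finset.HasAntidiagonal.antidiagonal (d - e), g (q.1 + e) q.2 e := by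
  rw [Finset.sum_sigma' (Finset.HasAntidiagonal.antidiagonal d) (fun p => Finset.Icc 1 p.1)
        (fun p e => g p.1 p.2 e),
      Finset.sum_sigma' (Finset.Icc 1 d) (fun e => Finset.HasAntidiagonal.antidiagonal (d - e))
        (fun e q => g (q.1 + e) q.2 e)]
  refine Finset.sum_nbij' (fun x => ⟨x.2, (x.1.1 - x.2, x.1.2)⟩)
    (fun x => ⟨(x.2.1 + x.1, x.2.2), x.1⟩) ?_ ?_ ?_ ?_ ?_
  · rintro ⟨⟨a, b⟩, e⟩ hx
    simp only [Finset.mem_sigma, Finset.HasAntidiagonal.mem_antidiagonal, Finset.mem_Icc] at hx ⊢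
    omega
  · rintro ⟨e, ⟨a, b⟩⟩ hx
    simp only [Finset.mem_sigma, Finset.HasAntidiagonal.mem_antidiagonal, Finset.mem_Icc] at hx ⊢
    omega
  · rintro ⟨⟨a, b⟩, e⟩ hx
    simp only [Finset.mem_sigma, Finset.HasAntidiagonal.mem_antidiagonal, Finset.mem_Icc] at hx
    have ha : a - e + e = a := by omega
    simp [ha]
  · rintro ⟨e, ⟨a, b⟩⟩ hx
    simp only [Finset.mem_sigma, Finset.HasAntidiagonal.mem_antidiagonal, Finset.mem_Icc] at hx
    have ha : a + e - e = a := by omega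
    simp [ha]
  · rintro ⟨⟨a, b⟩, e⟩ hx
    simp only [Finset.mem_sigma, Finset.HasAntidiagonal.mem_antidiagonal, Finset.mem_Icc] at hx
    have ha : a - e + e = a := by omega
    simp only [ha]

lemma reg_F {FC1 FC2 : Fin n → Fin n → Fin n → ℕ → Kalpha n}
    {F : Fin n → Fin n → ℕ → ℕ → RatFunc (Kalpha n)}
    (hrec : MRecursive n FC1 FC2 F) {i j : Fin n} (hij : i ≠ j) {c : Kalpha n}
    (hc0 : c ≠ 0)
    (h2 : ∀ m : Fin n, m ≠ j → ∀ e : ℕ, 1 ≤ e → c ≠ (av n m - av n j) / (e : Kalpha n))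
    (h1 : ∀ m : Fin n, m ≠ i → ∀ e : ℕ, 1 ≤ e → c ≠ (av n m - av n i) / (e : Kalpha n))
    (a b : ℕ) : Reg c (F i j a b) := by
  obtain ⟨L, hL, hEq⟩ := hrec i j hij a b
  rw [hEq]
  refine reg_add (reg_add ?_ ?_) ?_
  · obtain ⟨p, m, rfl⟩ := hL
    rw [← RatFunc.algebraMap_X, ← map_pow]
    refine reg_div _ _ ?_
    simpa using pow_ne_zero m hc0
  · refine reg_sum _ _ fun e he => reg_sum _ _ fun k hk => ?_
    refine reg_term _ _ ?_ _
    exact h2 k (Finset.ne_of_mem_erase hk) e (Finset.mem_Icc.mp he).1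
  · refine reg_sum _ _ fun e he => reg_sum _ _ fun k hk => ?_
    refine reg_term _ _ ?_ _
    exact h1 k (Finset.ne_of_mem_erase hk) e (Finset.mem_Icc.mp he).1

lemma ev_Fbar {F : Fin n → Fin n → ℕ → ℕ → RatFunc (Kalpha n)}
    (i k : Fin n) (m : ℕ) (c : Kalpha n)
    (hreg : ∀ p ∈ Finset.HasAntidiagonal.antidiagonal m, Reg c (F i k p.1 p.2)) :
    ev c (Fbar n F i k m) = (-1 : Kalpha n) ^ m *
      ∑ p ∈ Finset.HasAntidiagonal.antidiagonal m,
        (1 + c * (((p.1 : Kalpha n) - (p.2 : Kalpha n)) / (av n i - av n k))) *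
          ev c (F i k p.1 p.2) := by
  have hregs : ∀ p ∈ Finset.HasAntidiagonal.antidiagonal m,
      Reg c ((1 + RatFunc.X *
          RatFunc.C (((p.1 : Kalpha n) - (p.2 : Kalpha n)) / (av n i - av n k))) *
        F i k p.1 p.2) :=
    fun p hp => reg_mul (reg_one_add_X_C _ _) (hreg p hp)
  simp only [Fbar]
  rw [neg_one_pow_eq, ev_mul (reg_algebraMap _ _) (reg_sum _ _ hregs), ev_algebraMap,
    ev_sum _ _ hregs]
  congr 1
  · simp
  · refine Finset.sum_congr rfl fun p hp => ?_
    rw [ev_mul (reg_one_add_X_C _ _) (hreg p hp), ev_one_add_X_C]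

lemma neg_pow_mul_C_div (d : ℕ) (w c : K) :
    (-1 : RatFunc K) ^ d * (RatFunc.C w / (RatFunc.X - RatFunc.C c))
      = RatFunc.C ((-1 : K) ^ d * w) / (RatFunc.X - RatFunc.C c) := by
  rw [map_mul, map_pow, map_neg, map_one, mul_div_assoc]

variable {FC1 FC2 : Fin n → Fin n → Fin n → ℕ → Kalpha n}
  {F : Fin n → Fin n → ℕ → ℕ → RatFunc (Kalpha n)}

lemma num2 (hrec : MRecursive n FC1 FC2 F) {i j k : Fin n}
    (hij : i ≠ j) (hik : i ≠ k) (hkj : k ≠ j) (e dd : ℕ) (he : 1 ≤ e) :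
    (-1 : Kalpha n) ^ (dd + e) *
      ∑ q ∈ Finset.HasAntidiagonal.antidiagonal dd,
        (1 + ((av n k - av n j) / (e : Kalpha n)) *
            (((q.1 : Kalpha n) - ((q.2 + e : ℕ) : Kalpha n)) / (av n i - av n j))) *
          (FC2 i j k e * ev ((av n k - av n j) / (e : Kalpha n)) (F i k q.1 q.2))
    = (-1 : Kalpha n) ^ e * ((av n i - av n k) / (av n i - av n j)) * FC2 i j k e *
        ev ((av n k - av n j) / (e : Kalpha n)) (Fbar n F i k dd) := by
  have he0 : (e : Kalpha n) ≠ 0 := Nat.cast_ne_zero.mpr (by omega)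
  have hij0 : av n i - av n j ≠ 0 := sub_ne_zero.mpr (av_ne hij)
  have hik0 : av n i - av n k ≠ 0 := sub_ne_zero.mpr (av_ne hik)
  have hreg : ∀ p ∈ Finset.HasAntidiagonal.antidiagonal dd,
      Reg ((av n k - av n j) / (e : Kalpha n)) (F i k p.1 p.2) := by
    intro p _
    refine reg_F hrec hik ?_ ?_ ?_ p.1 p.2
    · exact div_ne_zero (sub_ne_zero.mpr (av_ne hkj)) he0
    · intro m hm e' he'
      exact pole_ne hkj hm (Or.inl rfl) he he'
    · intro m hm e' he'
      exact pole_ne hkj hm (Or.inr ⟨hik, hij⟩) he he'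
  rw [ev_Fbar i k dd _ hreg, pow_add, Finset.mul_sum, Finset.mul_sum, Finset.mul_sum]
  refine Finset.sum_congr rfl fun q hq => ?_
  push_cast
  field_simp
  ring

lemma num2_zero (hsym : ∀ (i j : Fin n) (d₁ d₂ : ℕ), F i j d₁ d₂ = F j i d₂ d₁)
    {i j : Fin n} (hij : i ≠ j) (e dd : ℕ) (he : 1 ≤ e) :
    ∑ q ∈ Finset.HasAntidiagonal.antidiagonal dd,
        (1 + ((av n i - av n j) / (e : Kalpha n)) *
            (((q.1 : Kalpha n) - ((q.2 + e : ℕ) : Kalpha n)) / (av n i - av n j))) *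
          (FC2 i j i e * ev ((av n i - av n j) / (e : Kalpha n)) (F i i q.1 q.2)) = 0 := by
  have he0 : (e : Kalpha n) ≠ 0 := Nat.cast_ne_zero.mpr (by omega)
  have hij0 : av n i - av n j ≠ 0 := sub_ne_zero.mpr (av_ne hij)
  refine Finset.sum_involution (fun q _ => q.swap) ?_ ?_ ?_ ?_
  · intro q hq
    have hF : F i i q.2 q.1 = F i i q.1 q.2 := hsym i i q.2 q.1
    simp only [Prod.fst_swap, Prod.snd_swap, hF]
    have hcoeff : (1 + ((av n i - av n j) / (e : Kalpha n)) *
            (((q.1 : Kalpha n) - ((q.2 + e : ℕ) : Kalpha n)) / (av n i - av n j)))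
        + (1 + ((av n i - av n j) / (e : Kalpha n)) *
            (((q.2 : Kalpha n) - ((q.1 + e : ℕ) : Kalpha n)) / (av n i - av n j))) = 0 := by
      push_cast
      field_simp
      ring
    linear_combination
      (FC2 i j i e * ev ((av n i - av n j) / (e : Kalpha n)) (F i i q.1 q.2)) * hcoeff
  · intro q hq hf hswap
    apply hf
    have h12 : q.2 = q.1 := congrArg Prod.fst hswap
    have hc : (1 + ((av n i - av n j) / (e : Kalpha n)) *
        (((q.1 : Kalpha n) - ((q.2 + e : ℕ) : Kalpha n)) / (av n i - av n j))) = 0 := by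
      rw [h12]
      push_cast
      field_simp
      try ring
    rw [hc, zero_mul]
  · intro q hq
    exact Finset.HasAntidiagonal.swap_mem_antidiagonal.mpr hq
  · intro q hq
    exact Prod.swap_swap q

lemma num1 (hrec : MRecursive n FC1 FC2 F) {i j k : Fin n}
    (hij : i ≠ j) (hkj : k ≠ j) (hki : k ≠ i) (e dd : ℕ) (he : 1 ≤ e) :
    (-1 : Kalpha n) ^ (dd + e) *
      ∑ q ∈ Finset.HasAntidiagonal.antidiagonal dd,
        (1 + ((av n k - av n i) / (e : Kalpha n)) *
            ((((q.1 + e : ℕ) : Kalpha n) - (q.2 : Kalpha n)) / (av n i - av n j))) *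
          (FC1 i j k e * ev ((av n k - av n i) / (e : Kalpha n)) (F k j q.1 q.2))
    = (-1 : Kalpha n) ^ e * ((av n k - av n j) / (av n i - av n j)) * FC1 i j k e *
        ev ((av n k - av n i) / (e : Kalpha n)) (Fbar n F k j dd) := by
  have he0 : (e : Kalpha n) ≠ 0 := Nat.cast_ne_zero.mpr (by omega)
  have hij0 : av n i - av n j ≠ 0 := sub_ne_zero.mpr (av_ne hij)
  have hkj0 : av n k - av n j ≠ 0 := sub_ne_zero.mpr (av_ne hkj)
  have hreg : ∀ p ∈ Finset.HasAntidiagonal.antidiagonal dd,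
      Reg ((av n k - av n i) / (e : Kalpha n)) (F k j p.1 p.2) := by
    intro p _
    refine reg_F hrec hkj ?_ ?_ ?_ p.1 p.2
    · exact div_ne_zero (sub_ne_zero.mpr (av_ne hki)) he0
    · intro m hm e' he'
      exact pole_ne hki hm (Or.inr ⟨hkj.symm, hij.symm⟩) he he'
    · intro m hm e' he'
      exact pole_ne hki hm (Or.inl rfl) he he'
  rw [ev_Fbar k j dd _ hreg, pow_add, Finset.mul_sum, Finset.mul_sum, Finset.mul_sum]
  refine Finset.sum_congr rfl fun q hq => ?_
  push_cast
  field_simp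
  ring

lemma num1_zero (hsym : ∀ (i j : Fin n) (d₁ d₂ : ℕ), F i j d₁ d₂ = F j i d₂ d₁)
    {i j : Fin n} (hij : i ≠ j) (e dd : ℕ) (he : 1 ≤ e) :
    ∑ q ∈ Finset.HasAntidiagonal.antidiagonal dd,
        (1 + ((av n j - av n i) / (e : Kalpha n)) *
            ((((q.1 + e : ℕ) : Kalpha n) - (q.2 : Kalpha n)) / (av n i - av n j))) *
          (FC1 i j j e * ev ((av n j - av n i) / (e : Kalpha n)) (F j j q.1 q.2)) = 0 := by
  have he0 : (e : Kalpha n) ≠ 0 := Nat.cast_ne_zero.mpr (by omega)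
  have hij0 : av n i - av n j ≠ 0 := sub_ne_zero.mpr (av_ne hij)
  refine Finset.sum_involution (fun q _ => q.swap) ?_ ?_ ?_ ?_
  · intro q hq
    have hF : F j j q.2 q.1 = F j j q.1 q.2 := hsym j j q.2 q.1
    simp only [Prod.fst_swap, Prod.snd_swap, hF]
    have hcoeff : (1 + ((av n j - av n i) / (e : Kalpha n)) *
            ((((q.1 + e : ℕ) : Kalpha n) - (q.2 : Kalpha n)) / (av n i - av n j)))
        + (1 + ((av n j - av n i) / (e : Kalpha n)) *
            ((((q.2 + e : ℕ) : Kalpha n) - (q.1 : Kalpha n)) / (av n i - av n j))) = 0 := by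
      push_cast
      field_simp
      ring
    linear_combination
      (FC1 i j j e * ev ((av n j - av n i) / (e : Kalpha n)) (F j j q.1 q.2)) * hcoeff
  · intro q hq hf hswap
    apply hf
    have h12 : q.2 = q.1 := congrArg Prod.fst hswap
    have hc : (1 + ((av n j - av n i) / (e : Kalpha n)) *
        ((((q.1 + e : ℕ) : Kalpha n) - (q.2 : Kalpha n)) / (av n i - av n j))) = 0 := by
      rw [← h12]
      push_cast
      field_simp
      try ring
    rw [hc, zero_mul]
  · intro q hq
    exact Finset.HasAntidiagonal.swap_mem_antidiagonal.mpr hq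
  · intro q hq
    exact Prod.swap_swap q

set_option maxHeartbeats 2000000
set_option synthInstance.maxHeartbeats 400000

lemma claim2 (hsym : ∀ (i j : Fin n) (d₁ d₂ : ℕ), F i j d₁ d₂ = F j i d₂ d₁)
    (hrec : MRecursive n FC1 FC2 F) (i j : Fin n) (hij : i ≠ j) (d : ℕ) :
    ∃ L2 : RatFunc (Kalpha n), IsLaurentPoly L2 ∧
      (-1 : RatFunc (Kalpha n)) ^ d *
        ∑ p ∈ Finset.HasAntidiagonal.antidiagonal d,
          (1 + RatFunc.X * RatFunc.C (((p.1 : Kalpha n) - (p.2 : Kalpha n)) / (av n i - av n j))) *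
            ∑ e ∈ Finset.Icc 1 p.2, ∑ k ∈ Finset.univ.erase j,
              RatFunc.C (FC2 i j k e *
                  ev ((av n k - av n j) / (e : Kalpha n)) (F i k p.1 (p.2 - e))) /
                (RatFunc.X - RatFunc.C ((av n k - av n j) / (e : Kalpha n)))
      = L2 + ∑ e ∈ Finset.Icc 1 d, ∑ k ∈ Finset.univ.erase j,
          RatFunc.C ((-1 : Kalpha n) ^ e * ((av n i - av n k) / (av n i - av n j)) *
              FC2 i j k e *
              ev ((av n k - av n j) / (e : Kalpha n)) (Fbar n F i k (d - e))) /
            (RatFunc.X - RatFunc.C ((av n k - av n j) / (e : Kalpha n))) := by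
  classical
  refine ⟨(-1 : RatFunc (Kalpha n)) ^ d *
      ∑ p ∈ Finset.HasAntidiagonal.antidiagonal d, ∑ e ∈ Finset.Icc 1 p.2, ∑ k ∈ Finset.univ.erase j,
        RatFunc.C ((((p.1 : Kalpha n) - (p.2 : Kalpha n)) / (av n i - av n j)) *
          (FC2 i j k e * ev ((av n k - av n j) / (e : Kalpha n)) (F i k p.1 (p.2 - e)))),
    ?_, ?_⟩
  · exact laurent_neg_one_pow_mul d (laurent_sum _ _ fun p _ => laurent_sum _ _ fun e _ =>
      laurent_sum _ _ fun k _ => laurent_C _)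
  have hsplit : ∀ p ∈ Finset.HasAntidiagonal.antidiagonal d,
      (1 + RatFunc.X * RatFunc.C (((p.1 : Kalpha n) - (p.2 : Kalpha n)) / (av n i - av n j))) *
        (∑ e ∈ Finset.Icc 1 p.2, ∑ k ∈ Finset.univ.erase j,
          RatFunc.C (FC2 i j k e *
              ev ((av n k - av n j) / (e : Kalpha n)) (F i k p.1 (p.2 - e))) /
            (RatFunc.X - RatFunc.C ((av n k - av n j) / (e : Kalpha n))))
      = (∑ e ∈ Finset.Icc 1 p.2, ∑ k ∈ Finset.univ.erase j,
          RatFunc.C ((((p.1 : Kalpha n) - (p.2 : Kalpha n)) / (av n i - av n j)) *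
            (FC2 i j k e * ev ((av n k - av n j) / (e : Kalpha n)) (F i k p.1 (p.2 - e)))))
        + ∑ e ∈ Finset.Icc 1 p.2, ∑ k ∈ Finset.univ.erase j,
          RatFunc.C ((1 + ((av n k - av n j) / (e : Kalpha n)) *
              (((p.1 : Kalpha n) - (p.2 : Kalpha n)) / (av n i - av n j))) *
            (FC2 i j k e * ev ((av n k - av n j) / (e : Kalpha n)) (F i k p.1 (p.2 - e)))) /
            (RatFunc.X - RatFunc.C ((av n k - av n j) / (e : Kalpha n))) := by
    intro p _
    rw [Finset.mul_sum, ← Finset.sum_add_distrib]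
    refine Finset.sum_congr rfl fun e _ => ?_
    rw [Finset.mul_sum, ← Finset.sum_add_distrib]
    exact Finset.sum_congr rfl fun k _ => keydiv _ _ _
  rw [Finset.sum_congr rfl hsplit, Finset.sum_add_distrib, mul_add]
  congr 1
  calc (-1 : RatFunc (Kalpha n)) ^ d *
        ∑ p ∈ Finset.HasAntidiagonal.antidiagonal d, ∑ e ∈ Finset.Icc 1 p.2, ∑ k ∈ Finset.univ.erase j,
          RatFunc.C ((1 + ((av n k - av n j) / (e : Kalpha n)) *
              (((p.1 : Kalpha n) - (p.2 : Kalpha n)) / (av n i - av n j))) *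
            (FC2 i j k e * ev ((av n k - av n j) / (e : Kalpha n)) (F i k p.1 (p.2 - e)))) /
            (RatFunc.X - RatFunc.C ((av n k - av n j) / (e : Kalpha n)))
      = (-1 : RatFunc (Kalpha n)) ^ d *
        ∑ e ∈ Finset.Icc 1 d, ∑ q ∈ Finset.HasAntidiagonal.antidiagonal (d - e), ∑ k ∈ Finset.univ.erase j,
          RatFunc.C ((1 + ((av n k - av n j) / (e : Kalpha n)) *
              (((q.1 : Kalpha n) - ((q.2 + e : ℕ) : Kalpha n)) / (av n i - av n j))) *
            (FC2 i j k e * ev ((av n k - av n j) / (e : Kalpha n)) (F i k q.1 (q.2 + e - e)))) /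
            (RatFunc.X - RatFunc.C ((av n k - av n j) / (e : Kalpha n))) := by
        exact congrArg (fun z => (-1 : RatFunc (Kalpha n)) ^ d * z)
          (sum_shift2 d fun a b e => ∑ k ∈ Finset.univ.erase j,
            RatFunc.C ((1 + ((av n k - av n j) / (e : Kalpha n)) *
                (((a : Kalpha n) - (b : Kalpha n)) / (av n i - av n j))) *
              (FC2 i j k e * ev ((av n k - av n j) / (e : Kalpha n)) (F i k a (b - e)))) /
              (RatFunc.X - RatFunc.C ((av n k - av n j) / (e : Kalpha n))))
    _ = (-1 : RatFunc (Kalpha n)) ^ d *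
        ∑ e ∈ Finset.Icc 1 d, ∑ q ∈ Finset.HasAntidiagonal.antidiagonal (d - e), ∑ k ∈ Finset.univ.erase j,
          RatFunc.C ((1 + ((av n k - av n j) / (e : Kalpha n)) *
              (((q.1 : Kalpha n) - ((q.2 + e : ℕ) : Kalpha n)) / (av n i - av n j))) *
            (FC2 i j k e * ev ((av n k - av n j) / (e : Kalpha n)) (F i k q.1 q.2))) /
            (RatFunc.X - RatFunc.C ((av n k - av n j) / (e : Kalpha n))) := by
        simp only [Nat.add_sub_cancel]
    _ = (-1 : RatFunc (Kalpha n)) ^ d *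
        ∑ e ∈ Finset.Icc 1 d, ∑ k ∈ Finset.univ.erase j, ∑ q ∈ Finset.HasAntidiagonal.antidiagonal (d - e),
          RatFunc.C ((1 + ((av n k - av n j) / (e : Kalpha n)) *
              (((q.1 : Kalpha n) - ((q.2 + e : ℕ) : Kalpha n)) / (av n i - av n j))) *
            (FC2 i j k e * ev ((av n k - av n j) / (e : Kalpha n)) (F i k q.1 q.2))) /
            (RatFunc.X - RatFunc.C ((av n k - av n j) / (e : Kalpha n))) := by
        exact congrArg (fun z => (-1 : RatFunc (Kalpha n)) ^ d * z)
          (Finset.sum_congr rfl fun e _ => Finset.sum_comm)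
    _ = (-1 : RatFunc (Kalpha n)) ^ d *
        ∑ e ∈ Finset.Icc 1 d, ∑ k ∈ Finset.univ.erase j,
          RatFunc.C (∑ q ∈ Finset.HasAntidiagonal.antidiagonal (d - e),
            (1 + ((av n k - av n j) / (e : Kalpha n)) *
              (((q.1 : Kalpha n) - ((q.2 + e : ℕ) : Kalpha n)) / (av n i - av n j))) *
            (FC2 i j k e * ev ((av n k - av n j) / (e : Kalpha n)) (F i k q.1 q.2))) /
            (RatFunc.X - RatFunc.C ((av n k - av n j) / (e : Kalpha n))) := by
        refine congrArg (fun z => (-1 : RatFunc (Kalpha n)) ^ d * z)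
          (Finset.sum_congr rfl fun e _ => Finset.sum_congr rfl fun k _ => ?_)
        rw [← Finset.sum_div, ← map_sum]
    _ = ∑ e ∈ Finset.Icc 1 d, ∑ k ∈ Finset.univ.erase j,
          RatFunc.C ((-1 : Kalpha n) ^ d * ∑ q ∈ Finset.HasAntidiagonal.antidiagonal (d - e),
            (1 + ((av n k - av n j) / (e : Kalpha n)) *
              (((q.1 : Kalpha n) - ((q.2 + e : ℕ) : Kalpha n)) / (av n i - av n j))) *
            (FC2 i j k e * ev ((av n k - av n j) / (e : Kalpha n)) (F i k q.1 q.2))) /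
            (RatFunc.X - RatFunc.C ((av n k - av n j) / (e : Kalpha n))) := by
        rw [Finset.mul_sum]
        refine Finset.sum_congr rfl fun e _ => ?_
        rw [Finset.mul_sum]
        exact Finset.sum_congr rfl fun k _ => neg_pow_mul_C_div d _ _
    _ = ∑ e ∈ Finset.Icc 1 d, ∑ k ∈ Finset.univ.erase j,
          RatFunc.C ((-1 : Kalpha n) ^ e * ((av n i - av n k) / (av n i - av n j)) *
              FC2 i j k e *
              ev ((av n k - av n j) / (e : Kalpha n)) (Fbar n F i k (d - e))) /
            (RatFunc.X - RatFunc.C ((av n k - av n j) / (e : Kalpha n))) := by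
        refine Finset.sum_congr rfl fun e he => Finset.sum_congr rfl fun k hk => ?_
        have he1 : 1 ≤ e := (Finset.mem_Icc.mp he).1
        have he2 : e ≤ d := (Finset.mem_Icc.mp he).2
        have hkj : k ≠ j := Finset.ne_of_mem_erase hk
        by_cases hik : i = k
        · subst hik
          rw [num2_zero (F := F) (FC2 := FC2) hsym hij e (d - e) he1, mul_zero]
          simp
        · have h := num2 (F := F) hrec hij hik hkj e (d - e) he1
          rw [Nat.sub_add_cancel he2] at h
          rw [h]

lemma claim1 (hsym : ∀ (i j : Fin n) (d₁ d₂ : ℕ), F i j d₁ d₂ = F j i d₂ d₁)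
    (hrec : MRecursive n FC1 FC2 F) (i j : Fin n) (hij : i ≠ j) (d : ℕ) :
    ∃ L1 : RatFunc (Kalpha n), IsLaurentPoly L1 ∧
      (-1 : RatFunc (Kalpha n)) ^ d *
        ∑ p ∈ Finset.HasAntidiagonal.antidiagonal d,
          (1 + RatFunc.X * RatFunc.C (((p.1 : Kalpha n) - (p.2 : Kalpha n)) / (av n i - av n j))) *
            ∑ e ∈ Finset.Icc 1 p.1, ∑ k ∈ Finset.univ.erase i,
              RatFunc.C (FC1 i j k e *
                  ev ((av n k - av n i) / (e : Kalpha n)) (F k j (p.1 - e) p.2)) /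
                (RatFunc.X - RatFunc.C ((av n k - av n i) / (e : Kalpha n)))
      = L1 + ∑ e ∈ Finset.Icc 1 d, ∑ k ∈ Finset.univ.erase i,
          RatFunc.C ((-1 : Kalpha n) ^ e * ((av n k - av n j) / (av n i - av n j)) *
              FC1 i j k e *
              ev ((av n k - av n i) / (e : Kalpha n)) (Fbar n F k j (d - e))) /
            (RatFunc.X - RatFunc.C ((av n k - av n i) / (e : Kalpha n))) := by
  classical
  refine ⟨(-1 : RatFunc (Kalpha n)) ^ d *
      ∑ p ∈ Finset.HasAntidiagonal.antidiagonal d, ∑ e ∈ Finset.Icc 1 p.1, ∑ k ∈ Finset.univ.erase i,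
        RatFunc.C ((((p.1 : Kalpha n) - (p.2 : Kalpha n)) / (av n i - av n j)) *
          (FC1 i j k e * ev ((av n k - av n i) / (e : Kalpha n)) (F k j (p.1 - e) p.2))),
    ?_, ?_⟩
  · exact laurent_neg_one_pow_mul d (laurent_sum _ _ fun p _ => laurent_sum _ _ fun e _ =>
      laurent_sum _ _ fun k _ => laurent_C _)
  have hsplit : ∀ p ∈ Finset.HasAntidiagonal.antidiagonal d,
      (1 + RatFunc.X * RatFunc.C (((p.1 : Kalpha n) - (p.2 : Kalpha n)) / (av n i - av n j))) *
        (∑ e ∈ Finset.Icc 1 p.1, ∑ k ∈ Finset.univ.erase i,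
          RatFunc.C (FC1 i j k e *
              ev ((av n k - av n i) / (e : Kalpha n)) (F k j (p.1 - e) p.2)) /
            (RatFunc.X - RatFunc.C ((av n k - av n i) / (e : Kalpha n))))
      = (∑ e ∈ Finset.Icc 1 p.1, ∑ k ∈ Finset.univ.erase i,
          RatFunc.C ((((p.1 : Kalpha n) - (p.2 : Kalpha n)) / (av n i - av n j)) *
            (FC1 i j k e * ev ((av n k - av n i) / (e : Kalpha n)) (F k j (p.1 - e) p.2))))
        + ∑ e ∈ Finset.Icc 1 p.1, ∑ k ∈ Finset.univ.erase i,
          RatFunc.C ((1 + ((av n k - av n i) / (e : Kalpha n)) *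
              (((p.1 : Kalpha n) - (p.2 : Kalpha n)) / (av n i - av n j))) *
            (FC1 i j k e * ev ((av n k - av n i) / (e : Kalpha n)) (F k j (p.1 - e) p.2))) /
            (RatFunc.X - RatFunc.C ((av n k - av n i) / (e : Kalpha n))) := by
    intro p _
    rw [Finset.mul_sum, ← Finset.sum_add_distrib]
    refine Finset.sum_congr rfl fun e _ => ?_
    rw [Finset.mul_sum, ← Finset.sum_add_distrib]
    exact Finset.sum_congr rfl fun k _ => keydiv _ _ _
  rw [Finset.sum_congr rfl hsplit, Finset.sum_add_distrib, mul_add]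
  congr 1
  calc (-1 : RatFunc (Kalpha n)) ^ d *
        ∑ p ∈ Finset.HasAntidiagonal.antidiagonal d, ∑ e ∈ Finset.Icc 1 p.1, ∑ k ∈ Finset.univ.erase i,
          RatFunc.C ((1 + ((av n k - av n i) / (e : Kalpha n)) *
              (((p.1 : Kalpha n) - (p.2 : Kalpha n)) / (av n i - av n j))) *
            (FC1 i j k e * ev ((av n k - av n i) / (e : Kalpha n)) (F k j (p.1 - e) p.2))) /
            (RatFunc.X - RatFunc.C ((av n k - av n i) / (e : Kalpha n)))
      = (-1 : RatFunc (Kalpha n)) ^ d *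
        ∑ e ∈ Finset.Icc 1 d, ∑ q ∈ Finset.HasAntidiagonal.antidiagonal (d - e), ∑ k ∈ Finset.univ.erase i,
          RatFunc.C ((1 + ((av n k - av n i) / (e : Kalpha n)) *
              ((((q.1 + e : ℕ) : Kalpha n) - (q.2 : Kalpha n)) / (av n i - av n j))) *
            (FC1 i j k e * ev ((av n k - av n i) / (e : Kalpha n)) (F k j (q.1 + e - e) q.2))) /
            (RatFunc.X - RatFunc.C ((av n k - av n i) / (e : Kalpha n))) := by
        exact congrArg (fun z => (-1 : RatFunc (Kalpha n)) ^ d * z)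
          (sum_shift1 d fun a b e => ∑ k ∈ Finset.univ.erase i,
            RatFunc.C ((1 + ((av n k - av n i) / (e : Kalpha n)) *
                (((a : Kalpha n) - (b : Kalpha n)) / (av n i - av n j))) *
              (FC1 i j k e * ev ((av n k - av n i) / (e : Kalpha n)) (F k j (a - e) b))) /
              (RatFunc.X - RatFunc.C ((av n k - av n i) / (e : Kalpha n))))
    _ = (-1 : RatFunc (Kalpha n)) ^ d *
        ∑ e ∈ Finset.Icc 1 d, ∑ q ∈ Finset.HasAntidiagonal.antidiagonal (d - e), ∑ k ∈ Finset.univ.erase i,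
          RatFunc.C ((1 + ((av n k - av n i) / (e : Kalpha n)) *
              ((((q.1 + e : ℕ) : Kalpha n) - (q.2 : Kalpha n)) / (av n i - av n j))) *
            (FC1 i j k e * ev ((av n k - av n i) / (e : Kalpha n)) (F k j q.1 q.2))) /
            (RatFunc.X - RatFunc.C ((av n k - av n i) / (e : Kalpha n))) := by
        simp only [Nat.add_sub_cancel]
    _ = (-1 : RatFunc (Kalpha n)) ^ d *
        ∑ e ∈ Finset.Icc 1 d, ∑ k ∈ Finset.univ.erase i, ∑ q ∈ Finset.HasAntidiagonal.antidiagonal (d - e),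
          RatFunc.C ((1 + ((av n k - av n i) / (e : Kalpha n)) *
              ((((q.1 + e : ℕ) : Kalpha n) - (q.2 : Kalpha n)) / (av n i - av n j))) *
            (FC1 i j k e * ev ((av n k - av n i) / (e : Kalpha n)) (F k j q.1 q.2))) /
            (RatFunc.X - RatFunc.C ((av n k - av n i) / (e : Kalpha n))) := by
        exact congrArg (fun z => (-1 : RatFunc (Kalpha n)) ^ d * z)
          (Finset.sum_congr rfl fun e _ => Finset.sum_comm)
    _ = (-1 : RatFunc (Kalpha n)) ^ d *
        ∑ e ∈ Finset.Icc 1 d, ∑ k ∈ Finset.univ.erase i,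
          RatFunc.C (∑ q ∈ Finset.HasAntidiagonal.antidiagonal (d - e),
            (1 + ((av n k - av n i) / (e : Kalpha n)) *
              ((((q.1 + e : ℕ) : Kalpha n) - (q.2 : Kalpha n)) / (av n i - av n j))) *
            (FC1 i j k e * ev ((av n k - av n i) / (e : Kalpha n)) (F k j q.1 q.2))) /
            (RatFunc.X - RatFunc.C ((av n k - av n i) / (e : Kalpha n))) := by
        refine congrArg (fun z => (-1 : RatFunc (Kalpha n)) ^ d * z)
          (Finset.sum_congr rfl fun e _ => Finset.sum_congr rfl fun k _ => ?_)
        rw [← Finset.sum_div, ← map_sum]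
    _ = ∑ e ∈ Finset.Icc 1 d, ∑ k ∈ Finset.univ.erase i,
          RatFunc.C ((-1 : Kalpha n) ^ d * ∑ q ∈ Finset.HasAntidiagonal.antidiagonal (d - e),
            (1 + ((av n k - av n i) / (e : Kalpha n)) *
              ((((q.1 + e : ℕ) : Kalpha n) - (q.2 : Kalpha n)) / (av n i - av n j))) *
            (FC1 i j k e * ev ((av n k - av n i) / (e : Kalpha n)) (F k j q.1 q.2))) /
            (RatFunc.X - RatFunc.C ((av n k - av n i) / (e : Kalpha n))) := by
        rw [Finset.mul_sum]
        refine Finset.sum_congr rfl fun e _ => ?_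
        rw [Finset.mul_sum]
        exact Finset.sum_congr rfl fun k _ => neg_pow_mul_C_div d _ _
    _ = ∑ e ∈ Finset.Icc 1 d, ∑ k ∈ Finset.univ.erase i,
          RatFunc.C ((-1 : Kalpha n) ^ e * ((av n k - av n j) / (av n i - av n j)) *
              FC1 i j k e *
              ev ((av n k - av n i) / (e : Kalpha n)) (Fbar n F k j (d - e))) /
            (RatFunc.X - RatFunc.C ((av n k - av n i) / (e : Kalpha n))) := by
        refine Finset.sum_congr rfl fun e he => Finset.sum_congr rfl fun k hk => ?_
        have he1 : 1 ≤ e := (Finset.mem_Icc.mp he).1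
        have he2 : e ≤ d := (Finset.mem_Icc.mp he).2
        have hki : k ≠ i := Finset.ne_of_mem_erase hk
        by_cases hkj : k = j
        · subst hkj
          rw [num1_zero (F := F) (FC1 := FC1) hsym hij e (d - e) he1, mul_zero]
          simp
        · have h := num1 (F := F) hrec hij hkj hki e (d - e) he1
          rw [Nat.sub_add_cancel he2] at h
          rw [h]

end FbarAux


/-- **Proposition 3.6**: if `ℱ` is symmetric in `𝐱` and `𝔉`-recursive, then `ℱ̄` is
`C`-recursive with `C_{ij}^{ik}(d) = (−1)^d (α_i−α_k)/(α_i−α_j) · 𝔉_{ij}^{ik}(d)` and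
`C_{ij}^{kj}(d) = (−1)^d (α_k−α_j)/(α_i−α_j) · 𝔉_{ij}^{kj}(d)`. -/
theorem Fbar_CRecursive (n : ℕ)
    (FC1 FC2 : Fin n → Fin n → Fin n → ℕ → Kalpha n)
    (F : Fin n → Fin n → ℕ → ℕ → RatFunc (Kalpha n))
    (hsym : ∀ (i j : Fin n) (d₁ d₂ : ℕ), F i j d₁ d₂ = F j i d₂ d₁)
    (hrec : MRecursive n FC1 FC2 F) :
    CRecursive n
      (fun i j k d => (-1 : Kalpha n) ^ d *
        ((av n k - av n j) / (av n i - av n j)) * FC1 i j k d)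
      (fun i j k d => (-1 : Kalpha n) ^ d *
        ((av n i - av n k) / (av n i - av n j)) * FC2 i j k d)
      (Fbar n F) := by
  intro i j hij d
  classical
  have hch := fun p : ℕ × ℕ => hrec i j hij p.1 p.2
  choose L hL hLe using hch
  obtain ⟨L2, hL2, hB2⟩ := FbarAux.claim2 (FC1 := FC1) hsym hrec i j hij d
  obtain ⟨L1, hL1, hB1⟩ := FbarAux.claim1 (FC2 := FC2) hsym hrec i j hij d
  refine ⟨((-1 : RatFunc (Kalpha n)) ^ d *
      ∑ p ∈ Finset.HasAntidiagonal.antidiagonal d,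
        (1 + RatFunc.X * RatFunc.C (((p.1 : Kalpha n) - (p.2 : Kalpha n)) / (av n i - av n j))) *
          L p) + L2 + L1, ?_, ?_⟩
  · exact FbarAux.laurent_add (FbarAux.laurent_add (FbarAux.laurent_neg_one_pow_mul d
      (FbarAux.laurent_sum _ _ fun p _ => FbarAux.laurent_mul
        (by rw [FbarAux.one_add_X_C_eq]; exact FbarAux.laurent_algebraMap _) (hL p))) hL2) hL1
  · calc Fbar n F i j d
        = (-1 : RatFunc (Kalpha n)) ^ d * ∑ p ∈ Finset.HasAntidiagonal.antidiagonal d,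
            ((1 + RatFunc.X * RatFunc.C (((p.1 : Kalpha n) - (p.2 : Kalpha n)) /
                (av n i - av n j))) * L p
            + (1 + RatFunc.X * RatFunc.C (((p.1 : Kalpha n) - (p.2 : Kalpha n)) /
                (av n i - av n j))) *
              (∑ e ∈ Finset.Icc 1 p.2, ∑ k ∈ Finset.univ.erase j,
                RatFunc.C (FC2 i j k e *
                    ev ((av n k - av n j) / (e : Kalpha n)) (F i k p.1 (p.2 - e))) /
                  (RatFunc.X - RatFunc.C ((av n k - av n j) / (e : Kalpha n))))
            + (1 + RatFunc.X * RatFunc.C (((p.1 : Kalpha n) - (p.2 : Kalpha n)) /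
                (av n i - av n j))) *
              (∑ e ∈ Finset.Icc 1 p.1, ∑ k ∈ Finset.univ.erase i,
                RatFunc.C (FC1 i j k e *
                    ev ((av n k - av n i) / (e : Kalpha n)) (F k j (p.1 - e) p.2)) /
                  (RatFunc.X - RatFunc.C ((av n k - av n i) / (e : Kalpha n))))) := by
          simp only [Fbar]
          exact congrArg (fun z => (-1 : RatFunc (Kalpha n)) ^ d * z)
            (Finset.sum_congr rfl fun p _ => by rw [hLe p, mul_add, mul_add])
      _ = ((-1 : RatFunc (Kalpha n)) ^ d * ∑ p ∈ Finset.HasAntidiagonal.antidiagonal d,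
            (1 + RatFunc.X * RatFunc.C (((p.1 : Kalpha n) - (p.2 : Kalpha n)) /
              (av n i - av n j))) * L p)
          + ((-1 : RatFunc (Kalpha n)) ^ d * ∑ p ∈ Finset.HasAntidiagonal.antidiagonal d,
            (1 + RatFunc.X * RatFunc.C (((p.1 : Kalpha n) - (p.2 : Kalpha n)) /
              (av n i - av n j))) *
              ∑ e ∈ Finset.Icc 1 p.2, ∑ k ∈ Finset.univ.erase j,
                RatFunc.C (FC2 i j k e *
                    ev ((av n k - av n j) / (e : Kalpha n)) (F i k p.1 (p.2 - e))) /
                  (RatFunc.X - RatFunc.C ((av n k - av n j) / (e : Kalpha n))))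
          + ((-1 : RatFunc (Kalpha n)) ^ d * ∑ p ∈ Finset.HasAntidiagonal.antidiagonal d,
            (1 + RatFunc.X * RatFunc.C (((p.1 : Kalpha n) - (p.2 : Kalpha n)) /
              (av n i - av n j))) *
              ∑ e ∈ Finset.Icc 1 p.1, ∑ k ∈ Finset.univ.erase i,
                RatFunc.C (FC1 i j k e *
                    ev ((av n k - av n i) / (e : Kalpha n)) (F k j (p.1 - e) p.2)) /
                  (RatFunc.X - RatFunc.C ((av n k - av n i) / (e : Kalpha n)))) := by
          rw [Finset.sum_add_distrib, Finset.sum_add_distrib, mul_add, mul_add]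
      _ = ((-1 : RatFunc (Kalpha n)) ^ d * ∑ p ∈ Finset.HasAntidiagonal.antidiagonal d,
            (1 + RatFunc.X * RatFunc.C (((p.1 : Kalpha n) - (p.2 : Kalpha n)) /
              (av n i - av n j))) * L p)
          + (L2 + ∑ e ∈ Finset.Icc 1 d, ∑ k ∈ Finset.univ.erase j,
              RatFunc.C ((-1 : Kalpha n) ^ e * ((av n i - av n k) / (av n i - av n j)) *
                  FC2 i j k e *
                  ev ((av n k - av n j) / (e : Kalpha n)) (Fbar n F i k (d - e))) /
                (RatFunc.X - RatFunc.C ((av n k - av n j) / (e : Kalpha n))))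
          + (L1 + ∑ e ∈ Finset.Icc 1 d, ∑ k ∈ Finset.univ.erase i,
              RatFunc.C ((-1 : Kalpha n) ^ e * ((av n k - av n j) / (av n i - av n j)) *
                  FC1 i j k e *
                  ev ((av n k - av n i) / (e : Kalpha n)) (Fbar n F k j (d - e))) /
                (RatFunc.X - RatFunc.C ((av n k - av n i) / (e : Kalpha n)))) := by
          rw [hB2, hB1]
      _ = (((-1 : RatFunc (Kalpha n)) ^ d * ∑ p ∈ Finset.HasAntidiagonal.antidiagonal d,
            (1 + RatFunc.X * RatFunc.C (((p.1 : Kalpha n) - (p.2 : Kalpha n)) /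
              (av n i - av n j))) * L p) + L2 + L1)
          + ∑ e ∈ Finset.Icc 1 d,
              ((∑ k ∈ Finset.univ.erase j,
                RatFunc.C ((-1 : Kalpha n) ^ e * ((av n i - av n k) / (av n i - av n j)) *
                    FC2 i j k e *
                    ev ((av n k - av n j) / (e : Kalpha n)) (Fbar n F i k (d - e))) /
                  (RatFunc.X - RatFunc.C ((av n k - av n j) / (e : Kalpha n))))
              + (∑ k ∈ Finset.univ.erase i,
                RatFunc.C ((-1 : Kalpha n) ^ e * ((av n k - av n j) / (av n i - av n j)) *
                    FC1 i j k e *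
                    ev ((av n k - av n i) / (e : Kalpha n)) (Fbar n F k j (d - e))) /
                  (RatFunc.X - RatFunc.C ((av n k - av n i) / (e : Kalpha n))))) := by
          rw [Finset.sum_add_distrib]
          ring


end
end

section
/- The degree-d coefficient Ẏ_d(ℏ) := (−1)^d Σ_{d₁+d₂=d} (x₁−x₂+(d₁−d₂)ℏ) ∏_{k=1}^ℓ ∏_{l=1}^{a_k d}(a_k(x₁+x₂)+lℏ) / [(x₁−x₂) ∏_{i=1}^2 ∏_{l=1}^{d_i}((x_i+lℏ)^n − x_i^n)] is a symmetric function in (x₁,x₂) lying in ℚ(x₁,x₂,ℏ); in particular the apparent pole along x₁ = x₂ cancels after summing over all ordered pairs (d₁,d₂) with d₁+d₂ = d. -/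
noncomputable section

open Finset

/-- The degree-`d` coefficient `Ẏ_d(ℏ)` of the hypergeometric series `Ẏ_{n;𝐚}`:
`Ẏ_d(ℏ) = (−1)^d Σ_{d₁+d₂=d} (x₁−x₂+(d₁−d₂)ℏ) ∏_{k=1}^ℓ ∏_{l=1}^{a_k d}(a_k(x₁+x₂)+lℏ)
  / [(x₁−x₂) ∏_{i=1}^2 ∏_{l=1}^{d_i}((x_i+lℏ)^n − x_i^n)]`,
written with the field elements `x₁, x₂, h` substituted for the variables. -/
def Ydot {L : Type*} [Field L] (n ℓ : ℕ) (a : Fin ℓ → ℕ+) (d : ℕ)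
    (x₁ x₂ h : L) : L :=
  (-1 : L) ^ d * ∑ p ∈ Finset.HasAntidiagonal.antidiagonal d,
    ((x₁ - x₂ + ((p.1 : L) - (p.2 : L)) * h) *
      ∏ k : Fin ℓ, ∏ l ∈ Finset.Icc 1 ((a k : ℕ) * d),
        (((a k : ℕ) : L) * (x₁ + x₂) + (l : L) * h)) /
    ((x₁ - x₂) *
      (∏ l ∈ Finset.Icc 1 p.1, ((x₁ + (l : L) * h) ^ n - x₁ ^ n)) *
      (∏ l ∈ Finset.Icc 1 p.2, ((x₂ + (l : L) * h) ^ n - x₂ ^ n)))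

/-- The field `ℚ(x₁,x₂,ℏ)`. -/
abbrev Frac3 : Type := FractionRing (MvPolynomial (Fin 3) ℚ)

/-- The images of the variables `x₁, x₂, ℏ` in `ℚ(x₁,x₂,ℏ)`. -/
def xv (i : Fin 3) : Frac3 := algebraMap (MvPolynomial (Fin 3) ℚ) Frac3 (MvPolynomial.X i)

namespace YdotAux

open MvPolynomial

abbrev R3 : Type := MvPolynomial (Fin 3) ℚ

/-- Swapping `x₁ ↔ x₂` leaves `Ydot` invariant (pure reindexing of the sum). -/
lemma Ydot_swap {L : Type*} [Field L] (n ℓ : ℕ) (a : Fin ℓ → ℕ+) (d : ℕ) (x y h : L) :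
    Ydot n ℓ a d x y h = Ydot n ℓ a d y x h := by
  unfold Ydot
  congr 1
  conv_rhs => rw [← Finset.HasAntidiagonal.map_swap_antidiagonal (n := d), Finset.sum_map]
  refine Finset.sum_congr rfl fun p hp => ?_
  simp only [Function.Embedding.coeFn_mk, Prod.fst_swap, Prod.snd_swap]
  simp only [add_comm y x]
  rw [← neg_div_neg_eq]
  congr 1 <;> ring

def Dfac (n : ℕ) (i : Fin 3) (l : ℕ) : R3 := (X i + (l : R3) * X 2) ^ n - (X i) ^ n

def Dprod (n : ℕ) (i : Fin 3) (s : Finset ℕ) : R3 := ∏ l ∈ s, Dfac n i l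

lemma Dfac_ne_zero {n : ℕ} (hn : 0 < n) {i : Fin 3} (hi : i ≠ 2) {l : ℕ} (hl : l ≠ 0) :
    Dfac n i l ≠ 0 := by
  intro h
  have h2 := congrArg (eval (fun j : Fin 3 => if j = 2 then (1:ℚ) else 0)) h
  simp [Dfac, hi, zero_pow hn.ne', hl] at h2

lemma Dprod_ne_zero {n : ℕ} (hn : 0 < n) {i : Fin 3} (hi : i ≠ 2) {s : Finset ℕ}
    (hs : 0 ∉ s) : Dprod n i s ≠ 0 := by
  rw [Dprod, Finset.prod_ne_zero_iff]
  exact fun l hl => Dfac_ne_zero hn hi (fun h => hs (h ▸ hl))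

lemma Dprod_split {n : ℕ} {i : Fin 3} {k d : ℕ} (hk : k ≤ d) :
    Dprod n i (Finset.Icc 1 k) * Dprod n i (Finset.Icc (k+1) d)
      = Dprod n i (Finset.Icc 1 d) := by
  have h1 : Finset.Icc 1 k = Finset.Ioc 0 k := rfl
  have h2 : Finset.Icc (k+1) d = Finset.Ioc k d := Finset.Icc_add_one_left_eq_Ioc k d
  have h3 : Finset.Icc 1 d = Finset.Ioc 0 d := rfl
  rw [Dprod, Dprod, Dprod, h1, h2, h3]
  exact Finset.prod_Ioc_consecutive _ (Nat.zero_le k) hk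

/-- Divisibility by `X 1 - X 0` follows from vanishing along the diagonal. -/
lemma dvd_of_diag_eq_zero (P : R3)
    (h : MvPolynomial.aeval (fun t : Fin 3 =>
        if t = 1 then (MvPolynomial.X 0 : R3) else MvPolynomial.X t) P = 0) :
    (X 1 - X 0 : R3) ∣ P := by
  rw [← Ideal.mem_span_singleton]
  set I := Ideal.span {(X 1 - X 0 : R3)} with hI
  have hkey : (Ideal.Quotient.mkₐ ℚ I).comp (MvPolynomial.aeval (fun t : Fin 3 =>
      if t = 1 then (MvPolynomial.X 0 : R3) else MvPolynomial.X t))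
      = Ideal.Quotient.mkₐ ℚ I := by
    apply MvPolynomial.algHom_ext
    intro i
    simp only [AlgHom.comp_apply, aeval_X, Ideal.Quotient.mkₐ_eq_mk]
    by_cases hi : i = 1
    · subst hi
      rw [if_pos rfl, Ideal.Quotient.mk_eq_mk_iff_sub_mem]
      have : -(X 1 - X 0 : R3) ∈ I := neg_mem (Ideal.subset_span rfl)
      simpa using this
    · rw [if_neg hi]
  have happ := congrArg (fun f : R3 →ₐ[ℚ] _ => f P) hkey
  simp only [AlgHom.comp_apply, h, map_zero, Ideal.Quotient.mkₐ_eq_mk] at happ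
  rwa [eq_comm, Ideal.Quotient.eq_zero_iff_mem] at happ

def σd : Fin 3 → R3 := fun t => if t = 1 then X 0 else X t

lemma aeval_σd_X0 : MvPolynomial.aeval σd (X 0 : R3) = X 0 := by simp [σd]
lemma aeval_σd_X1 : MvPolynomial.aeval σd (X 1 : R3) = X 0 := by simp [σd]
lemma aeval_σd_X2 : MvPolynomial.aeval σd (X 2 : R3) = X 2 := by simp [σd]

lemma aeval_σd_Dprod (n : ℕ) (i : Fin 3) (hi : i = 0 ∨ i = 1) (s : Finset ℕ) :
    MvPolynomial.aeval σd (Dprod n i s) = Dprod n 0 s := by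
  rw [Dprod, map_prod, Dprod]
  refine Finset.prod_congr rfl fun l _ => ?_
  rcases hi with h | h <;> subst h <;>
    simp [Dfac, σd]

def Cpoly (ℓ : ℕ) (a : Fin ℓ → ℕ+) (d : ℕ) : R3 :=
  ∏ k : Fin ℓ, ∏ l ∈ Finset.Icc 1 ((a k : ℕ) * d),
    (((a k : ℕ) : R3) * (X 0 + X 1) + (l : R3) * X 2)

def Ppoly (n ℓ : ℕ) (a : Fin ℓ → ℕ+) (d : ℕ) : R3 :=
  ∑ p ∈ Finset.HasAntidiagonal.antidiagonal d,
    (X 0 - X 1 + ((p.1 : R3) - (p.2 : R3)) * X 2) * Cpoly ℓ a d *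
      Dprod n 0 (Finset.Icc (p.1 + 1) d) * Dprod n 1 (Finset.Icc (p.2 + 1) d)

lemma aeval_σd_Ppoly (n ℓ : ℕ) (a : Fin ℓ → ℕ+) (d : ℕ) :
    MvPolynomial.aeval σd (Ppoly n ℓ a d) = 0 := by
  set C' : R3 := MvPolynomial.aeval σd (Cpoly ℓ a d) with hC'
  set g : ℕ → ℕ → R3 := fun i j =>
    (X 0 - X 0 + ((i : R3) - (j : R3)) * X 2) * C' *
      Dprod n 0 (Finset.Icc (i + 1) d) * Dprod n 0 (Finset.Icc (j + 1) d) with hg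
  have hform : MvPolynomial.aeval σd (Ppoly n ℓ a d)
      = ∑ p ∈ Finset.HasAntidiagonal.antidiagonal d, g p.1 p.2 := by
    rw [Ppoly, map_sum]
    refine Finset.sum_congr rfl fun p _ => ?_
    rw [map_mul, map_mul, map_mul, map_add, map_sub, map_mul, map_sub,
      aeval_σd_X0, aeval_σd_X1, aeval_σd_X2, map_natCast, map_natCast,
      aeval_σd_Dprod n 0 (Or.inl rfl), aeval_σd_Dprod n 1 (Or.inr rfl)]
  set S : R3 := ∑ p ∈ Finset.HasAntidiagonal.antidiagonal d, g p.1 p.2 with hS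
  have hswap : S = -S := by
    nth_rewrite 1 [hS]
    conv_lhs => rw [← Finset.HasAntidiagonal.map_swap_antidiagonal (n := d), Finset.sum_map]
    rw [← Finset.sum_neg_distrib]
    refine Finset.sum_congr rfl fun p _ => ?_
    simp only [Function.Embedding.coeFn_mk, Prod.fst_swap, Prod.snd_swap, hg]
    ring
  have h2 : (2 : R3) * S = 0 := by rw [two_mul]; nth_rewrite 1 [hswap]; ring
  rw [hform]
  rcases mul_eq_zero.mp h2 with h | h
  · exact absurd h two_ne_zero
  · exact h

lemma hinj3 : Function.Injective (algebraMap R3 Frac3) := IsFractionRing.injective R3 Frac3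

lemma map_Dprod (n : ℕ) (i : Fin 3) (s : Finset ℕ) :
    algebraMap R3 Frac3 (Dprod n i s)
      = ∏ l ∈ s, ((xv i + (l : Frac3) * xv 2) ^ n - (xv i) ^ n) := by
  rw [Dprod, map_prod]
  refine Finset.prod_congr rfl fun l _ => ?_
  simp [Dfac, xv]

lemma map_Cpoly (ℓ : ℕ) (a : Fin ℓ → ℕ+) (d : ℕ) :
    algebraMap R3 Frac3 (Cpoly ℓ a d)
      = ∏ k : Fin ℓ, ∏ l ∈ Finset.Icc 1 ((a k : ℕ) * d),
        (((a k : ℕ) : Frac3) * (xv 0 + xv 1) + (l : Frac3) * xv 2) := by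
  rw [Cpoly, map_prod]
  refine Finset.prod_congr rfl fun k _ => ?_
  rw [map_prod]
  refine Finset.prod_congr rfl fun l _ => ?_
  simp [xv]

lemma Δ_ne_zero : xv 0 - xv 1 ≠ 0 := by
  have : xv 0 - xv 1 = algebraMap R3 Frac3 (X 0 - X 1) := by simp [xv]
  rw [this, map_ne_zero_iff _ hinj3, sub_ne_zero]
  exact fun h => by simpa using MvPolynomial.X_injective h

lemma key (n ℓ : ℕ) (hn : 0 < n) (a : Fin ℓ → ℕ+) (d : ℕ) :
    Ydot n ℓ a d (xv 0) (xv 1) (xv 2) *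
      algebraMap R3 Frac3 (Dprod n 0 (Finset.Icc 1 d) * Dprod n 1 (Finset.Icc 1 d)) *
      (xv 0 - xv 1)
      = (-1 : Frac3) ^ d * algebraMap R3 Frac3 (Ppoly n ℓ a d) := by
  set φ := algebraMap R3 Frac3 with hφ
  set q : R3 := Dprod n 0 (Finset.Icc 1 d) * Dprod n 1 (Finset.Icc 1 d) with hq
  have hsum : (∑ p ∈ Finset.HasAntidiagonal.antidiagonal d,
      ((xv 0 - xv 1 + ((p.1 : Frac3) - (p.2 : Frac3)) * xv 2) *
        ∏ k : Fin ℓ, ∏ l ∈ Finset.Icc 1 ((a k : ℕ) * d),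
          (((a k : ℕ) : Frac3) * (xv 0 + xv 1) + (l : Frac3) * xv 2)) /
      ((xv 0 - xv 1) *
        (∏ l ∈ Finset.Icc 1 p.1, ((xv 0 + (l : Frac3) * xv 2) ^ n - (xv 0) ^ n)) *
        (∏ l ∈ Finset.Icc 1 p.2, ((xv 1 + (l : Frac3) * xv 2) ^ n - (xv 1) ^ n))))
      * (φ q * (xv 0 - xv 1)) = φ (Ppoly n ℓ a d) := by
    rw [Ppoly, map_sum, Finset.sum_mul]
    refine Finset.sum_congr rfl fun p hp => ?_
    have hp1 : p.1 ≤ d := by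
      have := Finset.HasAntidiagonal.mem_antidiagonal.mp hp; omega
    have hp2 : p.2 ≤ d := by
      have := Finset.HasAntidiagonal.mem_antidiagonal.mp hp; omega
    have hA : φ (Dprod n 0 (Finset.Icc 1 p.1)) ≠ 0 := by
      rw [map_ne_zero_iff _ hinj3]
      exact Dprod_ne_zero hn (by decide) (by simp)
    have hB : φ (Dprod n 1 (Finset.Icc 1 p.2)) ≠ 0 := by
      rw [map_ne_zero_iff _ hinj3]
      exact Dprod_ne_zero hn (by decide) (by simp)
    have hΔ := Δ_ne_zero
    rw [← map_Dprod n 0 (Finset.Icc 1 p.1), ← map_Dprod n 1 (Finset.Icc 1 p.2),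
      ← map_Cpoly ℓ a d]
    have hq0 : φ q = φ (Dprod n 0 (Finset.Icc 1 p.1)) * φ (Dprod n 0 (Finset.Icc (p.1+1) d))
        * (φ (Dprod n 1 (Finset.Icc 1 p.2)) * φ (Dprod n 1 (Finset.Icc (p.2+1) d))) := by
      rw [hq, ← Dprod_split (n := n) (i := 0) hp1, ← Dprod_split (n := n) (i := 1) hp2,
        map_mul, map_mul, map_mul]
    rw [hq0, map_mul, map_mul, map_mul, map_add, map_sub, map_mul, map_sub,
      map_natCast, map_natCast]
    have hxv : ∀ i : Fin 3, φ (X i) = xv i := fun i => rfl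
    rw [hxv, hxv, hxv]
    simp only [← hφ]
    field_simp
  unfold Ydot
  rw [← hsum]
  ring

end YdotAux

/-- `Ẏ_d(ℏ)` is a symmetric function of `(x₁,x₂)` lying in `ℚ(x₁,x₂,ℏ)`; in
particular the apparent pole along `x₁ = x₂` cancels after summing over all ordered
pairs `(d₁,d₂)` with `d₁+d₂ = d`: `Ẏ_d` can be written as `p/q` with `q` not
vanishing on the diagonal `x₂ = x₁`. -/
theorem Ydot_symmetric_and_regular (n ℓ : ℕ) (hn : 0 < n) (a : Fin ℓ → ℕ+) (d : ℕ) :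
    Ydot n ℓ a d (xv 1) (xv 0) (xv 2) = Ydot n ℓ a d (xv 0) (xv 1) (xv 2) ∧
    ∃ p q : MvPolynomial (Fin 3) ℚ,
      (MvPolynomial.aeval (fun t : Fin 3 =>
          if t = 1 then (MvPolynomial.X 0 : MvPolynomial (Fin 3) ℚ)
          else MvPolynomial.X t) q ≠ 0) ∧
      Ydot n ℓ a d (xv 0) (xv 1) (xv 2) * algebraMap (MvPolynomial (Fin 3) ℚ) Frac3 q
        = algebraMap (MvPolynomial (Fin 3) ℚ) Frac3 p := by
  open YdotAux MvPolynomial in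
  constructor
  · exact Ydot_swap n ℓ a d (xv 1) (xv 0) (xv 2)
  · obtain ⟨p₀, hp₀⟩ := dvd_of_diag_eq_zero (Ppoly n ℓ a d) (aeval_σd_Ppoly n ℓ a d)
    refine ⟨(-1 : R3) ^ (d + 1) * p₀,
      Dprod n 0 (Finset.Icc 1 d) * Dprod n 1 (Finset.Icc 1 d), ?_, ?_⟩
    · have hfun : (fun t : Fin 3 =>
          if t = 1 then (MvPolynomial.X 0 : R3) else MvPolynomial.X t) = σd := rfl
      rw [hfun, map_mul, aeval_σd_Dprod n 0 (Or.inl rfl), aeval_σd_Dprod n 1 (Or.inr rfl)]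
      exact mul_ne_zero (Dprod_ne_zero hn (by decide) (by simp))
        (Dprod_ne_zero hn (by decide) (by simp))
    · have hk := key n ℓ hn a d
      rw [hp₀] at hk
      apply mul_right_cancel₀ Δ_ne_zero
      rw [hk, map_mul, map_mul, map_sub, map_pow, map_neg, map_one]
      have hxv : ∀ i : Fin 3, algebraMap R3 Frac3 (MvPolynomial.X i) = xv i := fun i => rfl
      rw [hxv, hxv]
      ring

end
end

section
/- Let 𝒞^{(𝐫)}_{𝐩,s} ∈ ℚ[α][[q]] (for 𝐩,𝐫 ∈ (ℤ^{≥0})², s ∈ ℤ^{≥0}) satisfy the normalization ⟦𝒞^{(𝐫)}_{𝐩,s}⟧_{q;0} = δ_{𝐩,𝐫} δ_{|𝐫|,s} and 𝒞^{(𝐫)}_{𝐩,|𝐫|} = δ_{𝐩,𝐫} whenever |𝐫| ≤ |𝐩|. Then the system of equations Σ_{t=0}^r Σ_{s≤k−t} Ċ^{(t)}_{k,i;s,j} 𝒞^{(r₁,j₁)}_{s,j,r+r₁−t} = δ_{i,j₁} δ_{k,r₁} δ_{r,0} (for all admissible indices with r₁ ≤ k−r) has a unique solution Ċ^{(r)}_{k,i;s,j}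 ∈ ℚ[α][[q]], and it satisfies Ċ^{(0)}_{k,i;s,j} = δ_{k,s} δ_{i,j}. -/
noncomputable section

open Finset

variable {R : Type*} [CommRing R] {N : ℕ}

/-- The defining system of equations (4.14) for the structure constants
`Ċ^{(r)}_{k,i;s,j}`: for all admissible indices `r ≤ k`, `r₁ ≤ k − r`,
`Σ_{t=0}^{r} Σ_{s ≤ k−t} Σ_j Ċ^{(t)}_{k,i;s,j} 𝒞^{(r₁,j₁)}_{s,j,r+r₁−t} = δ_{i,j₁} δ_{k,r₁} δ_{r,0}`.
Here `D k i s j t` stands for `Ċ^{(t)}_{k,i;s,j}` and `C s j r₁ j₁ m` for `𝒞^{(r₁,j₁)}_{s,j,m}`. -/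
def SatisfiesSystem (C : ℕ → Fin N → ℕ → Fin N → ℕ → PowerSeries R)
    (D : ℕ → Fin N → ℕ → Fin N → ℕ → PowerSeries R) : Prop :=
  ∀ (k : ℕ) (i : Fin N) (r r₁ : ℕ) (j₁ : Fin N), r ≤ k → r₁ ≤ k - r →
    (∑ t ∈ Finset.range (r + 1), ∑ s ∈ Finset.range (k - t + 1), ∑ j : Fin N,
        D k i s j t * C s j r₁ j₁ (r + r₁ - t))
      = if i = j₁ ∧ k = r₁ ∧ r = 0 then 1 else 0


/-- The canonical solution, defined by lexicographic recursion on `(r, s)`. -/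
noncomputable def solAux (C : ℕ → Fin N → ℕ → Fin N → ℕ → PowerSeries R)
    (k : ℕ) (i : Fin N) : ℕ → Fin N → ℕ → PowerSeries R
  | s, j, r =>
    (if i = j ∧ k = s ∧ r = 0 then 1 else 0)
    - ∑ t ∈ (Finset.range r).attach, ∑ s' ∈ Finset.range (k - t.1 + 1), ∑ j' : Fin N,
        solAux C k i s' j' t.1 * C s' j' s j (r + s - t.1)
    - ∑ s' ∈ (Finset.range s).attach, ∑ j' : Fin N, solAux C k i s'.1 j' r * C s'.1 j' s j s
  termination_by s j r => (r, s)
  decreasing_by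
    · exact Prod.Lex.left _ _ (Finset.mem_range.mp t.2)
    · exact Prod.Lex.right _ (Finset.mem_range.mp s'.2)

lemma solAux_def (C : ℕ → Fin N → ℕ → Fin N → ℕ → PowerSeries R) (k s r : ℕ) (i j : Fin N) :
    solAux C k i s j r =
    (if i = j ∧ k = s ∧ r = 0 then 1 else 0)
    - ∑ t ∈ Finset.range r, ∑ s' ∈ Finset.range (k - t + 1), ∑ j' : Fin N,
        solAux C k i s' j' t * C s' j' s j (r + s - t)
    - ∑ s' ∈ Finset.range s, ∑ j' : Fin N, solAux C k i s' j' r * C s' j' s j s := by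
  rw [solAux]
  rw [← Finset.sum_attach (Finset.range r) (fun t => ∑ s' ∈ Finset.range (k - t + 1),
        ∑ j' : Fin N, solAux C k i s' j' t * C s' j' s j (r + s - t)),
     ← Finset.sum_attach (Finset.range s) (fun s' => ∑ j' : Fin N,
        solAux C k i s' j' r * C s' j' s j s)]

/-- Splitting lemma: isolating the diagonal term. -/
lemma split_sum (C D : ℕ → Fin N → ℕ → Fin N → ℕ → PowerSeries R)
    (hCdiag : ∀ (s : ℕ) (j : Fin N) (r₁ : ℕ) (j₁ : Fin N), r₁ ≤ s →
      C s j r₁ j₁ r₁ = if s = r₁ ∧ j = j₁ then 1 else 0)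
    (k : ℕ) (i : Fin N) (r r₁ : ℕ) (j₁ : Fin N) (hr : r ≤ k) (hr₁ : r₁ ≤ k - r) :
    (∑ t ∈ Finset.range (r + 1), ∑ s ∈ Finset.range (k - t + 1), ∑ j : Fin N,
        D k i s j t * C s j r₁ j₁ (r + r₁ - t))
    = D k i r₁ j₁ r
      + (∑ t ∈ Finset.range r, ∑ s ∈ Finset.range (k - t + 1), ∑ j : Fin N,
          D k i s j t * C s j r₁ j₁ (r + r₁ - t))
      + (∑ s ∈ Finset.range r₁, ∑ j : Fin N, D k i s j r * C s j r₁ j₁ r₁) := by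
  rw [Finset.sum_range_succ]
  have h1 : r + r₁ - r = r₁ := by omega
  rw [h1]
  have key : (∑ s ∈ Finset.range (k - r + 1), ∑ j : Fin N, D k i s j r * C s j r₁ j₁ r₁)
      = D k i r₁ j₁ r + ∑ s ∈ Finset.range r₁, ∑ j : Fin N, D k i s j r * C s j r₁ j₁ r₁ := by
    rw [Finset.range_eq_Ico, ← Finset.sum_Ico_consecutive _ (Nat.zero_le r₁) (by omega),
        ← Finset.range_eq_Ico]
    have h2 : (∑ s ∈ Finset.Ico r₁ (k - r + 1), ∑ j : Fin N, D k i s j r * C s j r₁ j₁ r₁)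
        = D k i r₁ j₁ r := by
      have h3 : ∀ s ∈ Finset.Ico r₁ (k - r + 1),
          (∑ j : Fin N, D k i s j r * C s j r₁ j₁ r₁)
          = if s = r₁ then D k i s j₁ r else 0 := by
        intro s hs
        rw [Finset.mem_Ico] at hs
        simp only [hCdiag s _ r₁ _ hs.1, mul_ite, mul_one, mul_zero]
        by_cases h : s = r₁
        · subst h; simp
        · simp [h]
      rw [Finset.sum_congr rfl h3, Finset.sum_ite_eq' (Finset.Ico r₁ (k - r + 1)) r₁
          (fun s => D k i s j₁ r)]
      rw [if_pos (by rw [Finset.mem_Ico]; omega)]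
    rw [h2]
    ring
  rw [key]
  ring

/-- Any solution satisfies the triangular recurrence. -/
lemma rec_of_sys {C D : ℕ → Fin N → ℕ → Fin N → ℕ → PowerSeries R}
    (hCdiag : ∀ (s : ℕ) (j : Fin N) (r₁ : ℕ) (j₁ : Fin N), r₁ ≤ s →
      C s j r₁ j₁ r₁ = if s = r₁ ∧ j = j₁ then 1 else 0)
    (hD : SatisfiesSystem C D)
    (k : ℕ) (i : Fin N) (r s : ℕ) (j : Fin N) (hr : r ≤ k) (hs : s ≤ k - r) :
    D k i s j r = (if i = j ∧ k = s ∧ r = 0 then 1 else 0)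
      - ∑ t ∈ Finset.range r, ∑ s' ∈ Finset.range (k - t + 1), ∑ j' : Fin N,
          D k i s' j' t * C s' j' s j (r + s - t)
      - ∑ s' ∈ Finset.range s, ∑ j' : Fin N, D k i s' j' r * C s' j' s j s := by
  have h := hD k i r s j hr hs
  rw [split_sum C D hCdiag k i r s j hr hs] at h
  linear_combination h

/-- Given structure constants `𝒞^{(𝐫)}_{𝐩,s} ∈ R[[q]]` satisfying the normalizations
`⟦𝒞^{(r₁,j₁)}_{s,j,m}⟧_{q;0} = δ_{(s,j),(r₁,j₁)} δ_{r₁,m}` and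
`𝒞^{(r₁,j₁)}_{s,j,r₁} = δ_{(s,j),(r₁,j₁)}` whenever `r₁ ≤ s`, the triangular system
of equations for `Ċ^{(r)}_{k,i;s,j}` has a solution, any two solutions agree on the
admissible range `r ≤ k`, `s ≤ k − r`, and any solution satisfies
`Ċ^{(0)}_{k,i;s,j} = δ_{k,s} δ_{i,j}`. -/
theorem structure_constants_unique
    (C : ℕ → Fin N → ℕ → Fin N → ℕ → PowerSeries R)
    (hC0 : ∀ (s : ℕ) (j : Fin N) (r₁ : ℕ) (j₁ : Fin N) (m : ℕ),
      PowerSeries.constantCoeff (C s j r₁ j₁ m)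
        = if s = r₁ ∧ j = j₁ ∧ r₁ = m then 1 else 0)
    (hCdiag : ∀ (s : ℕ) (j : Fin N) (r₁ : ℕ) (j₁ : Fin N), r₁ ≤ s →
      C s j r₁ j₁ r₁ = if s = r₁ ∧ j = j₁ then 1 else 0) :
    (∃ D : ℕ → Fin N → ℕ → Fin N → ℕ → PowerSeries R, SatisfiesSystem C D) ∧
    (∀ D D' : ℕ → Fin N → ℕ → Fin N → ℕ → PowerSeries R,
      SatisfiesSystem C D → SatisfiesSystem C D' →
      ∀ (k : ℕ) (i : Fin N) (s : ℕ) (j : Fin N) (r : ℕ), r ≤ k → s ≤ k - r →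
        D k i s j r = D' k i s j r) ∧
    (∀ D : ℕ → Fin N → ℕ → Fin N → ℕ → PowerSeries R, SatisfiesSystem C D →
      ∀ (k : ℕ) (i : Fin N) (s : ℕ) (j : Fin N), s ≤ k →
        D k i s j 0 = if k = s ∧ i = j then 1 else 0) := by
  constructor
  · -- existence
    refine ⟨fun k i s j r => solAux C k i s j r, ?_⟩
    intro k i r r₁ j₁ hr hr₁
    rw [split_sum C _ hCdiag k i r r₁ j₁ hr hr₁, solAux_def C k r₁ r i j₁]
    ring
  constructor
  · -- uniqueness
    intro D D' hD hD'
    have H : ∀ r s k (i j : Fin N), r ≤ k → s ≤ k - r → D k i s j r = D' k i s j r := by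
      intro r
      induction r using Nat.strong_induction_on with
      | _ r ihr =>
        intro s
        induction s using Nat.strong_induction_on with
        | _ s ihs =>
          intro k i j hrk hs
          rw [rec_of_sys hCdiag hD k i r s j hrk hs, rec_of_sys hCdiag hD' k i r s j hrk hs]
          have e1 : (∑ t ∈ Finset.range r, ∑ s' ∈ Finset.range (k - t + 1), ∑ j' : Fin N,
              D k i s' j' t * C s' j' s j (r + s - t))
            = ∑ t ∈ Finset.range r, ∑ s' ∈ Finset.range (k - t + 1), ∑ j' : Fin N,
              D' k i s' j' t * C s' j' s j (r + s - t) := by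
            refine Finset.sum_congr rfl fun t ht => Finset.sum_congr rfl fun s' hs' =>
              Finset.sum_congr rfl fun j' _ => ?_
            rw [Finset.mem_range] at ht hs'
            rw [ihr t ht s' k i j' (by omega) (by omega)]
          have e2 : (∑ s' ∈ Finset.range s, ∑ j' : Fin N, D k i s' j' r * C s' j' s j s)
            = ∑ s' ∈ Finset.range s, ∑ j' : Fin N, D' k i s' j' r * C s' j' s j s := by
            refine Finset.sum_congr rfl fun s' hs' => Finset.sum_congr rfl fun j' _ => ?_
            rw [Finset.mem_range] at hs'
            rw [ihs s' hs' k i j' hrk (by omega)]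
          rw [e1, e2]
    intro k i s j r hr hs
    exact H r s k i j hr hs
  · -- r = 0 characterization
    intro D hD k i
    have H : ∀ s, ∀ (j : Fin N), s ≤ k → D k i s j 0 = if k = s ∧ i = j then 1 else 0 := by
      intro s
      induction s using Nat.strong_induction_on with
      | _ s ihs =>
        intro j hs
        rw [rec_of_sys hCdiag hD k i 0 s j (Nat.zero_le k) (by omega)]
        have hz : (∑ s' ∈ Finset.range s, ∑ j' : Fin N, D k i s' j' 0 * C s' j' s j s)
            = 0 := by
          refine Finset.sum_eq_zero fun s' hs' => Finset.sum_eq_zero fun j' _ => ?_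
          rw [Finset.mem_range] at hs'
          rw [ihs s' hs' j' (by omega), if_neg (by rintro ⟨h1, -⟩; omega), zero_mul]
        rw [hz]
        simp only [Finset.range_zero, Finset.sum_empty, sub_zero]
        split_ifs with h1 h2 <;> first | rfl | tauto
    intro s j hs
    exact H s j hs


end
end
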